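/- arXiv:2004.00972 — 4 statements merged into one kernel-verified Lean document; each statement's English description precedes it below -/
import Mathlib

section
/- Let n ≥ 2 be an even integer, let e_1, …, e_n be nonnegative integers with ∑_{i=1}^n e_i = 2A for an integer A, and suppose there exists a set H ⊆ {1, …, n} with |H| = n/2 and ∑_{i∈H} e_i = A. Then the constructed scheduling instance admits a feasible schedule whose total completion time ∑_j C_j is at most V' = V_s + V_m + V_b. -/
/-!
The medium jobs of `H` run back to back from time `0`; their processing times add up to
`(n/2)·P + A = u₂`, so they finish exactly at `u₂`. The `M` small jobs fill `[u₂, u₂ + M)`,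
the other medium jobs (again of total length `u₂`, since the `e i` outside `H` also sum to `A`)
fill `[u₂ + M, 2u₂ + M)`, and the big jobs follow. Only the `n/2` jobs of `H` start before `u₂`,
and adding up the completion times block by block gives at most `V' - A·(n/2)·(n/2 - 1)`.
-/

open Classical

/-- Job set of the constructed instance: `n` medium jobs, `M = 200^(n²)` small jobs
and `M` big jobs. -/
abbrev RedJob (n : ℕ) := Fin n ⊕ Fin (200 ^ n ^ 2) ⊕ Fin (200 ^ n ^ 2)

/-- Processing times of the constructed instance: medium job `i` has processing
time `20^(n²) + e i`, small jobs have processing time `1`, big jobs `200^(n²)`. -/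
noncomputable def redProc (n : ℕ) (e : Fin n → ℕ) : RedJob n → ℝ
  | Sum.inl i => (20 : ℝ) ^ n ^ 2 + e i
  | Sum.inr (Sum.inl _) => 1
  | Sum.inr (Sum.inr _) => (200 : ℝ) ^ n ^ 2

/-- The second supply date `u₂ = (n/2)·20^(n²) + A`. -/
noncomputable def redU2 (n A : ℕ) : ℝ := ((n / 2 : ℕ) : ℝ) * (20 : ℝ) ^ n ^ 2 + A

/-- `V_s = M·u₂ + M(M+1)/2` where `M = 200^(n²)`. -/
noncomputable def redVs (n A : ℕ) : ℝ :=
  (200 : ℝ) ^ n ^ 2 * redU2 n A +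
    (200 : ℝ) ^ n ^ 2 * ((200 : ℝ) ^ n ^ 2 + 1) / 2

/-- `V_m = 2(20^(n²) + A)·((n/2)(n/2+1)/2) + (u₂ + 200^(n²))·(n/2)`. -/
noncomputable def redVm (n A : ℕ) : ℝ :=
  2 * ((20 : ℝ) ^ n ^ 2 + A) *
      (((n / 2 : ℕ) : ℝ) * (((n / 2 : ℕ) : ℝ) + 1) / 2) +
    (redU2 n A + (200 : ℝ) ^ n ^ 2) * ((n / 2 : ℕ) : ℝ)

/-- `V_b = M·(u₂ + M + 20^(n²)·(n/2) + A) + M·(M(M+1)/2)` where `M = 200^(n²)`. -/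
noncomputable def redVb (n A : ℕ) : ℝ :=
  (200 : ℝ) ^ n ^ 2 *
      (redU2 n A + (200 : ℝ) ^ n ^ 2 + (20 : ℝ) ^ n ^ 2 * ((n / 2 : ℕ) : ℝ) + A) +
    (200 : ℝ) ^ n ^ 2 * ((200 : ℝ) ^ n ^ 2 * ((200 : ℝ) ^ n ^ 2 + 1) / 2)

/-- `V' = V_s + V_m + V_b`. -/
noncomputable def redV' (n A : ℕ) : ℝ := redVs n A + redVm n A + redVb n A

open Finset

section Sequencing

variable {ι : Type*} [LinearOrder ι]

noncomputable def seqStart (p : ι → ℝ) (s : Finset ι) (i : ι) : ℝ :=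
  ∑ j ∈ s with j < i, p j

theorem Finset.sum_card_filter_le_mul_two (s : Finset ι) :
    (∑ i ∈ s, #{j ∈ s | j ≤ i}) * 2 = #s * (#s + 1) := by
  induction s using Finset.induction_on_max with
  | empty => simp
  | insert a s ha ih =>
    have has : a ∉ s := fun h => (ha a h).false
    have hfilter_a : {j ∈ insert a s | j ≤ a} = insert a s :=
      filter_true_of_mem fun j hj => (mem_insert.1 hj).elim le_of_eq fun h => (ha j h).le
    have hfilter : ∀ i ∈ s, {j ∈ insert a s | j ≤ i} = {j ∈ s | j ≤ i} := fun i hi => by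
      rw [filter_insert, if_neg (ha i hi).not_ge]
    rw [sum_insert has, sum_congr rfl fun i hi => by rw [hfilter i hi], hfilter_a,
      card_insert_of_notMem has, add_mul, ih]
    ring

variable {p : ι → ℝ} {s : Finset ι} {i i' : ι}

theorem seqStart_nonneg (hp : ∀ j ∈ s, 0 ≤ p j) (i : ι) : 0 ≤ seqStart p s i :=
  sum_nonneg fun j hj => hp j (mem_filter.1 hj).1

theorem seqStart_add_self (hi : i ∈ s) :
    seqStart p s i + p i = ∑ j ∈ s with j ≤ i, p j := by
  have hfilter : {j ∈ s | j ≤ i} = insert i {j ∈ s | j < i} := by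
    ext j
    simp only [mem_filter, mem_insert, le_iff_lt_or_eq]
    constructor
    · rintro ⟨hj, hlt | rfl⟩
      exacts [Or.inr ⟨hj, hlt⟩, Or.inl rfl]
    · rintro (rfl | ⟨hj, hlt⟩)
      exacts [⟨hi, Or.inr rfl⟩, ⟨hj, Or.inl hlt⟩]
  rw [hfilter, sum_insert (by simp), add_comm, seqStart]

theorem seqStart_add_le_seqStart (hp : ∀ j ∈ s, 0 ≤ p j) (hi : i ∈ s) (h : i < i') :
    seqStart p s i + p i ≤ seqStart p s i' := by
  rw [seqStart_add_self hi]
  refine sum_le_sum_of_subset_of_nonneg (fun j hj => ?_) fun j hj _ => hp j (mem_filter.1 hj).1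
  simp only [mem_filter] at hj ⊢
  exact ⟨hj.1, hj.2.trans_lt h⟩

theorem seqStart_add_le_sum (hp : ∀ j ∈ s, 0 ≤ p j) (hi : i ∈ s) :
    seqStart p s i + p i ≤ ∑ j ∈ s, p j := by
  rw [seqStart_add_self hi]
  exact sum_le_sum_of_subset_of_nonneg (filter_subset _ _) fun j hj _ => hp j hj

theorem seqStart_disjoint (hp : ∀ j ∈ s, 0 ≤ p j) (hi : i ∈ s) (hi' : i' ∈ s)
    (hne : i ≠ i') :
    seqStart p s i + p i ≤ seqStart p s i' ∨ seqStart p s i' + p i' ≤ seqStart p s i :=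
  hne.lt_or_gt.imp (seqStart_add_le_seqStart hp hi) (seqStart_add_le_seqStart hp hi')

theorem sum_add_seqStart_add_le (t c : ℝ) (hc : ∀ j ∈ s, c ≤ p j) :
    ∑ i ∈ s, (t + seqStart p s i + p i) ≤
      #s * t + c * (#s * (#s + 1) / 2) + #s * ∑ j ∈ s, (p j - c) := by
  have hexcess : ∀ j ∈ s, 0 ≤ p j - c := fun j hj => sub_nonneg.2 (hc j hj)
  have hterm : ∀ i ∈ s, t + seqStart p s i + p i ≤
      t + c * #{j ∈ s | j ≤ i} + ∑ j ∈ s, (p j - c) := fun i hi => by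
    have hsplit : ∑ j ∈ s with j ≤ i, p j =
        c * #{j ∈ s | j ≤ i} + ∑ j ∈ s with j ≤ i, (p j - c) := by
      rw [sum_sub_distrib, sum_const, nsmul_eq_mul]
      ring
    have hpartial := sum_le_sum_of_subset_of_nonneg (filter_subset (· ≤ i) s)
      fun j hj _ => hexcess j hj
    rw [add_assoc, seqStart_add_self hi, hsplit]
    linarith
  have hrank : ∑ i ∈ s, (#{j ∈ s | j ≤ i} : ℝ) = #s * (#s + 1) / 2 := by
    rw [eq_div_iff two_ne_zero]
    exact_mod_cast sum_card_filter_le_mul_two s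
  calc ∑ i ∈ s, (t + seqStart p s i + p i)
      ≤ ∑ i ∈ s, (t + c * #{j ∈ s | j ≤ i} + ∑ j ∈ s, (p j - c)) := sum_le_sum hterm
    _ = #s * t + c * (#s * (#s + 1) / 2) + #s * ∑ j ∈ s, (p j - c) := by
      rw [sum_add_distrib, sum_add_distrib, ← mul_sum, hrank]
      simp only [sum_const, nsmul_eq_mul]

theorem sum_add_seqStart_add_le_of_const (t c : ℝ) (hp : ∀ j ∈ s, p j = c) :
    ∑ i ∈ s, (t + seqStart p s i + p i) ≤ #s * t + c * (#s * (#s + 1) / 2) := by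
  simpa [sum_eq_zero fun j hj => sub_eq_zero.2 (hp j hj)] using
    sum_add_seqStart_add_le t c fun j hj => (hp j hj).ge

end Sequencing

theorem disjoint_of_blocks {κ : Type*} {σ p : κ → ℝ} {β : κ → ℕ} {T : ℕ → ℝ}
    (hT : Monotone T)
    (hσ : ∀ j, 0 ≤ σ j) (hfit : ∀ j, T (β j) + σ j + p j ≤ T (β j + 1))
    (hsame : ∀ j j', j ≠ j' → β j = β j' → σ j + p j ≤ σ j' ∨ σ j' + p j' ≤ σ j)
    {j j' : κ} (hne : j ≠ j') :
    T (β j) + σ j + p j ≤ T (β j') + σ j' ∨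
      T (β j') + σ j' + p j' ≤ T (β j) + σ j := by
  rcases lt_trichotomy (β j) (β j') with h | h | h
  · have := hT (Nat.succ_le_of_lt h)
    exact Or.inl (by linarith [hfit j, hσ j'])
  · rw [h]
    exact (hsame j j' hne h).imp (fun _ => by linarith) fun _ => by linarith
  · have := hT (Nat.succ_le_of_lt h)
    exact Or.inr (by linarith [hfit j', hσ j])

section Reduction

variable {n : ℕ}

def IsBalancedHalf (e : Fin n → ℕ) (A : ℕ) (F : Finset (Fin n)) : Prop :=
  #F = n / 2 ∧ ∑ i ∈ F, e i = A

theorem IsBalancedHalf.compl {e : Fin n → ℕ} {A : ℕ} {H : Finset (Fin n)} (heven : Even n)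
    (hsum : ∑ i, e i = 2 * A) (hH : IsBalancedHalf e A H) : IsBalancedHalf e A Hᶜ := by
  obtain ⟨hcard, hA⟩ := hH
  have := sum_add_sum_compl H e
  refine ⟨?_, by omega⟩
  rw [card_compl, hcard, Fintype.card_fin]
  obtain ⟨k, rfl⟩ := heven
  omega

theorem IsBalancedHalf.sum_redProc {e : Fin n → ℕ} {A : ℕ} {F : Finset (Fin n)}
    (hF : IsBalancedHalf e A F) : ∑ i ∈ F, (redProc n e ∘ Sum.inl) i = redU2 n A := by
  simp only [Function.comp_apply, redProc, redU2, sum_add_distrib, sum_const, hF.1, nsmul_eq_mul]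
  rw [← Nat.cast_sum, hF.2]

noncomputable def redBlockStart (u M : ℝ) : ℕ → ℝ
  | 0 => 0
  | 1 => u
  | 2 => u + M
  | 3 => 2 * u + M
  | _ => 2 * u + M + M * M

theorem redBlockStart_monotone {u M : ℝ} (hu : 0 ≤ u) (hM : 0 ≤ M) :
    Monotone (redBlockStart u M) :=
  monotone_nat_of_le_succ fun b => by
    rcases b with _ | _ | _ | _ | b <;> simp [redBlockStart] <;> nlinarith

def redBlock (H : Finset (Fin n)) : RedJob n → ℕ
  | Sum.inl i => if i ∈ H then 0 else 2
  | Sum.inr (Sum.inl _) => 1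
  | Sum.inr (Sum.inr _) => 3

noncomputable def redOffset (e : Fin n → ℕ) (H : Finset (Fin n)) : RedJob n → ℝ
  | Sum.inl i => seqStart (redProc n e ∘ Sum.inl) (if i ∈ H then H else Hᶜ) i
  | Sum.inr (Sum.inl k) => seqStart (redProc n e ∘ Sum.inr ∘ Sum.inl) univ k
  | Sum.inr (Sum.inr k) => seqStart (redProc n e ∘ Sum.inr ∘ Sum.inr) univ k

noncomputable def redSchedule (A : ℕ) (e : Fin n → ℕ) (H : Finset (Fin n)) (j : RedJob n) :
    ℝ :=
  redBlockStart (redU2 n A) ((200 : ℝ) ^ n ^ 2) (redBlock H j) + redOffset e H j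

end Reduction

section RedSchedule

variable {n A : ℕ} {e : Fin n → ℕ} {H : Finset (Fin n)}

theorem redProc_nonneg (e : Fin n → ℕ) (j : RedJob n) : 0 ≤ redProc n e j := by
  rcases j with i | k | k <;> simp only [redProc] <;> positivity

theorem redProc_comp_nonneg (e : Fin n → ℕ) {ι : Type} (f : ι → RedJob n) {s : Finset ι} :
    ∀ j ∈ s, 0 ≤ (redProc n e ∘ f) j :=
  fun _ _ => redProc_nonneg _ _

theorem redU2_nonneg (n A : ℕ) : 0 ≤ redU2 n A := by
  unfold redU2; positivity

theorem redOffset_nonneg (j : RedJob n) : 0 ≤ redOffset e H j := by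
  rcases j with i | k | k <;> exact seqStart_nonneg (redProc_comp_nonneg e _) _

theorem redBlockStart_nonneg (b : ℕ) : 0 ≤ redBlockStart (redU2 n A) ((200 : ℝ) ^ n ^ 2) b :=
  redBlockStart_monotone (redU2_nonneg n A) (by positivity) b.zero_le

theorem redSchedule_nonneg (j : RedJob n) : 0 ≤ redSchedule A e H j :=
  add_nonneg (redBlockStart_nonneg _) (redOffset_nonneg j)

theorem redSchedule_add_redProc_le_redBlockStart_succ (hH : IsBalancedHalf e A H)
    (hHc : IsBalancedHalf e A Hᶜ) (j : RedJob n) :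
    redSchedule A e H j + redProc n e j ≤
      redBlockStart (redU2 n A) ((200 : ℝ) ^ n ^ 2) (redBlock H j + 1) := by
  rw [redSchedule]
  rcases j with i | k | k
  · by_cases hi : i ∈ H
    · have hfit := seqStart_add_le_sum (redProc_comp_nonneg e Sum.inl) hi
      rw [hH.sum_redProc] at hfit
      simp only [redBlock, redOffset, redBlockStart, hi, if_true, Function.comp_apply] at hfit ⊢
      linarith
    · have hfit := seqStart_add_le_sum (redProc_comp_nonneg e Sum.inl) (mem_compl.2 hi)
      rw [hHc.sum_redProc] at hfit
      simp only [redBlock, redOffset, redBlockStart, hi, if_false, Function.comp_apply] at hfit ⊢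
      linarith
  · have hfit := seqStart_add_le_sum (redProc_comp_nonneg e (Sum.inr ∘ Sum.inl)) (mem_univ k)
    simp only [redBlock, redOffset, redBlockStart, Function.comp_apply, redProc, sum_const,
      card_univ, Fintype.card_fin, nsmul_eq_mul, Nat.cast_pow, Nat.cast_ofNat] at hfit ⊢
    linarith
  · have hfit := seqStart_add_le_sum (redProc_comp_nonneg e (Sum.inr ∘ Sum.inr)) (mem_univ k)
    simp only [redBlock, redOffset, redBlockStart, Function.comp_apply, redProc, sum_const,
      card_univ, Fintype.card_fin, nsmul_eq_mul, Nat.cast_pow, Nat.cast_ofNat] at hfit ⊢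
    linarith

theorem redOffset_disjoint_of_redBlock_eq {j j' : RedJob n} (hne : j ≠ j')
    (hβ : redBlock H j = redBlock H j') :
    redOffset e H j + redProc n e j ≤ redOffset e H j' ∨
      redOffset e H j' + redProc n e j' ≤ redOffset e H j := by
  rcases j with i | k | k <;> rcases j' with i' | k' | k'
  case inl.inl =>
    simp only [redBlock] at hβ
    have hne' : i ≠ i' := fun h => hne (congrArg _ h)
    by_cases hi : i ∈ H
    · have hi' : i' ∈ H := by simpa [hi] using hβ
      simp only [redOffset, hi, hi', if_true]
      exact seqStart_disjoint (redProc_comp_nonneg e Sum.inl) hi hi' hne'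
    · have hi' : i' ∉ H := by simpa [hi] using hβ
      simp only [redOffset, hi, hi', if_false]
      exact seqStart_disjoint (redProc_comp_nonneg e Sum.inl) (mem_compl.2 hi) (mem_compl.2 hi')
        hne'
  case inr.inl.inr.inl =>
    exact seqStart_disjoint (redProc_comp_nonneg e _) (mem_univ k) (mem_univ k')
      fun h => hne (by rw [h])
  case inr.inr.inr.inr =>
    exact seqStart_disjoint (redProc_comp_nonneg e _) (mem_univ k) (mem_univ k')
      fun h => hne (by rw [h])
  all_goals
    exfalso
    simp only [redBlock] at hβ
    try split_ifs at hβ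
    all_goals omega

theorem redSchedule_disjoint (hH : IsBalancedHalf e A H) (hHc : IsBalancedHalf e A Hᶜ)
    {j j' : RedJob n} (hne : j ≠ j') :
    redSchedule A e H j + redProc n e j ≤ redSchedule A e H j' ∨
      redSchedule A e H j' + redProc n e j' ≤ redSchedule A e H j :=
  disjoint_of_blocks (redBlockStart_monotone (redU2_nonneg n A) (by positivity))
    redOffset_nonneg (redSchedule_add_redProc_le_redBlockStart_succ hH hHc)
    (fun _ _ => redOffset_disjoint_of_redBlock_eq) hne

theorem card_filter_redSchedule_lt_le : #{j | redSchedule A e H j < redU2 n A} ≤ #H := by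
  calc #{j | redSchedule A e H j < redU2 n A}
      ≤ #(H.map .inl) := card_le_card fun j hj => ?_
    _ = #H := card_map _
  by_contra hjH
  have hβ : 1 ≤ redBlock H j := by
    rcases j with i | k | k <;> simp_all [redBlock]
  have hstart : redU2 n A ≤ redBlockStart (redU2 n A) ((200 : ℝ) ^ n ^ 2) (redBlock H j) :=
    redBlockStart_monotone (redU2_nonneg n A) (by positivity) hβ
  have hlate := (mem_filter.1 hj).2
  have := redOffset_nonneg (e := e) (H := H) j
  rw [redSchedule] at hlate
  linarith

theorem IsBalancedHalf.sum_add_seqStart_le {F : Finset (Fin n)} (hF : IsBalancedHalf e A F)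
    (t : ℝ) :
    ∑ i ∈ F, (t + seqStart (redProc n e ∘ Sum.inl) F i + (redProc n e ∘ Sum.inl) i) ≤
      (n / 2 : ℕ) * t + (20 : ℝ) ^ n ^ 2 * ((n / 2 : ℕ) * ((n / 2 : ℕ) + 1) / 2) +
        (n / 2 : ℕ) * A := by
  have hexcess : ∑ j ∈ F, ((redProc n e ∘ Sum.inl) j - (20 : ℝ) ^ n ^ 2) = A := by
    simp only [Function.comp_apply, redProc, add_sub_cancel_left]
    exact_mod_cast hF.2
  have := sum_add_seqStart_add_le (s := F) (p := redProc n e ∘ Sum.inl) t ((20 : ℝ) ^ n ^ 2)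
    fun j _ => by simp only [Function.comp_apply, redProc, le_add_iff_nonneg_right, Nat.cast_nonneg]
  rwa [hexcess, hF.1] at this

theorem sum_redSchedule_add_redProc_le (hH : IsBalancedHalf e A H)
    (hHc : IsBalancedHalf e A Hᶜ) :
    ∑ j, (redSchedule A e H j + redProc n e j) ≤ redV' n A := by
  set T := redBlockStart (redU2 n A) ((200 : ℝ) ^ n ^ 2)
  have hmedH : ∑ i ∈ H, (redSchedule A e H (.inl i) + redProc n e (.inl i)) =
      ∑ i ∈ H, (T 0 + seqStart (redProc n e ∘ Sum.inl) H i + (redProc n e ∘ Sum.inl) i) :=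
    sum_congr rfl fun i hi => by simp [redSchedule, redBlock, redOffset, hi, T]
  have hmedHc : ∑ i ∈ Hᶜ, (redSchedule A e H (.inl i) + redProc n e (.inl i)) =
      ∑ i ∈ Hᶜ,
        (T 2 + seqStart (redProc n e ∘ Sum.inl) Hᶜ i + (redProc n e ∘ Sum.inl) i) :=
    sum_congr rfl fun i hi => by simp [redSchedule, redBlock, redOffset, mem_compl.1 hi, T]
  have hsmall := sum_add_seqStart_add_le_of_const (s := univ)
    (p := redProc n e ∘ Sum.inr ∘ Sum.inl) (T 1) 1 fun _ _ => rfl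
  have hbig := sum_add_seqStart_add_le_of_const (s := univ)
    (p := redProc n e ∘ Sum.inr ∘ Sum.inr) (T 3) ((200 : ℝ) ^ n ^ 2) fun _ _ => rfl
  have h1 := hH.sum_add_seqStart_le (T 0)
  have h2 := hHc.sum_add_seqStart_le (T 2)
  have hM : ((#(univ : Finset (Fin (200 ^ n ^ 2))) : ℕ) : ℝ) = (200 : ℝ) ^ n ^ 2 := by simp
  refine (le_of_eq ?_).trans ((add_le_add (add_le_add h1 h2) (add_le_add hsmall hbig)).trans ?_)
  · rw [Fintype.sum_sum_type, Fintype.sum_sum_type, ← sum_add_sum_compl H, hmedH, hmedHc]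
    rfl
  have hAm : (A : ℝ) * (n / 2 : ℕ) ≤ A * ((n / 2 : ℕ) * (n / 2 : ℕ)) :=
    mul_le_mul_of_nonneg_left (by exact_mod_cast Nat.le_mul_self _) (Nat.cast_nonneg _)
  simp only [T, redBlockStart, hM, redV', redVs, redVm, redVb, redU2]
  linarith

end RedSchedule

theorem partition_yes_implies_schedule_general (n A : ℕ) (heven : Even n)
    (e : Fin n → ℕ) (hsum : ∑ i, e i = 2 * A)
    (H : Finset (Fin n)) (hcard : H.card = n / 2) (hA : ∑ i ∈ H, e i = A) :
    ∃ S : RedJob n → ℝ,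
      (∀ j, 0 ≤ S j) ∧
      (∀ j j', j ≠ j' →
        S j + redProc n e j ≤ S j' ∨ S j' + redProc n e j' ≤ S j) ∧
      (Finset.univ.filter (fun j => S j < redU2 n A)).card ≤ n / 2 ∧
      ∑ j, (S j + redProc n e j) ≤ redV' n A := by
  have hH : IsBalancedHalf e A H := ⟨hcard, hA⟩
  have hHc := hH.compl heven hsum
  exact ⟨redSchedule A e H, redSchedule_nonneg, fun _ _ => redSchedule_disjoint hH hHc,
    card_filter_redSchedule_lt_le.trans hcard.le, sum_redSchedule_add_redProc_le hH hHc⟩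

/-- If EQUAL-CARDINALITY-PARTITION has a solution `H` (with
`|H| = n/2` and `∑_{i∈H} e i = A`), then the constructed scheduling instance has a
feasible schedule (nonnegative start times, pairwise disjoint processing intervals,
at most `n/2` jobs starting before `u₂`) of total completion time at most `V'`. -/
theorem partition_yes_implies_schedule (n A : ℕ) (hn : 2 ≤ n) (heven : Even n)
    (e : Fin n → ℕ) (hsum : ∑ i, e i = 2 * A)
    (H : Finset (Fin n)) (hcard : H.card = n / 2) (hA : ∑ i ∈ H, e i = A) :
    ∃ S : RedJob n → ℝ,
      (∀ j, 0 ≤ S j) ∧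
      (∀ j j', j ≠ j' →
        S j + redProc n e j ≤ S j' ∨ S j' + redProc n e j' ≤ S j) ∧
      (Finset.univ.filter (fun j => S j < redU2 n A)).card ≤ n / 2 ∧
      ∑ j, (S j + redProc n e j) ≤ redV' n A :=
  partition_yes_implies_schedule_general n A heven e hsum H hcard hA
end

section
/- Consider an instance of single-machine scheduling with one non-renewable resource in which every job has the same resource requirement a_j = ā > 0 and the total requirement equals the total supply, i.e. n·ā = b_q. Let n_ℓ := ⌊b_ℓ / ā⌋ for ℓ = 1, …, q. Then every feasible schedule satisfies ∑_{j=1}^n C_j ≥ ∑_{ℓ=2}^q u_ℓ·(n_ℓ − n_{ℓ−1}). -/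
open Classical

/-- Cumulative supply over the first `ℓ+1` supplies (0-based indexing of supplies). -/
noncomputable def cumSupply (btilde : ℕ → ℝ) (ℓ : ℕ) : ℝ :=
  ∑ k ∈ Finset.range (ℓ + 1), btilde k

/-- For an instance with equal resource requirements `a_j = ā > 0`
and `n·ā = b_q`, every feasible schedule satisfies
`∑ C_j ≥ ∑_{ℓ=2}^{q} u_ℓ·(n_ℓ − n_{ℓ−1})`, where `n_ℓ = ⌊b_ℓ/ā⌋`.
Supplies are 0-based: `u 0 = 0` and period `ℓ` (for `ℓ < q`) has cumulative
supply `cumSupply btilde ℓ`; feasibility is stated for every time `t ≥ 0` with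
`ℓ` the latest supply date not after `t`. -/
theorem weighted_supply_lower_bound (n q : ℕ) (hq : 1 ≤ q)
    (p : Fin n → ℝ) (hp : ∀ j, 0 < p j)
    (abar : ℝ) (habar : 0 < abar)
    (u btilde : ℕ → ℝ)
    (hu0 : u 0 = 0)
    (humono : ∀ ℓ, ℓ + 1 < q → u ℓ < u (ℓ + 1))
    (hbt : ∀ ℓ, ℓ < q → 0 < btilde ℓ)
    (htot : (n : ℝ) * abar = cumSupply btilde (q - 1))
    (S : Fin n → ℝ) (hS0 : ∀ j, 0 ≤ S j)
    (hdisj : ∀ j j', j ≠ j' → S j + p j ≤ S j' ∨ S j' + p j' ≤ S j)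
    (hfeas : ∀ t : ℝ, 0 ≤ t → ∀ ℓ, ℓ < q → u ℓ ≤ t →
      (∀ ℓ', ℓ' < q → u ℓ' ≤ t → ℓ' ≤ ℓ) →
      ((Finset.univ.filter (fun j => S j ≤ t)).card : ℝ) * abar ≤ cumSupply btilde ℓ) :
    ∑ j, (S j + p j) ≥
      ∑ ℓ ∈ Finset.Ico 1 q,
        u ℓ * ((⌊cumSupply btilde ℓ / abar⌋₊ - ⌊cumSupply btilde (ℓ - 1) / abar⌋₊ : ℕ) : ℝ) := by
  classical
  set N : ℕ → ℕ := fun ℓ => ⌊cumSupply btilde ℓ / abar⌋₊ with hN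
  -- monotonicity of u
  have umono : ∀ a b : ℕ, a ≤ b → b < q → u a ≤ u b := by
    intro a b hab hb
    induction b with
    | zero => simp [Nat.le_zero.mp hab]
    | succ m ih =>
      rcases Nat.lt_or_ge a (m+1) with h | h
      · exact le_trans (ih (Nat.lt_succ_iff.mp h) (Nat.lt_of_succ_lt hb))
          (le_of_lt (humono m hb))
      · have : a = m + 1 := le_antisymm hab h
        simp [this]
  have unn : ∀ ℓ, ℓ < q → 0 ≤ u ℓ := by
    intro ℓ h
    have := umono 0 ℓ (Nat.zero_le _) h
    rwa [hu0] at this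
  -- monotonicity of cumSupply / N
  have csmono : ∀ a b : ℕ, a ≤ b → b < q → cumSupply btilde a ≤ cumSupply btilde b := by
    intro a b hab hb
    induction b with
    | zero => simp [Nat.le_zero.mp hab]
    | succ m ih =>
      rcases Nat.lt_or_ge a (m+1) with h | h
      · have h1 : cumSupply btilde a ≤ cumSupply btilde m :=
          ih (Nat.lt_succ_iff.mp h) (Nat.lt_of_succ_lt hb)
        have h2 : cumSupply btilde (m+1) = cumSupply btilde m + btilde (m+1) :=
          Finset.sum_range_succ _ _
        have h3 : 0 < btilde (m+1) := hbt (m+1) hb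
        linarith
      · have : a = m + 1 := le_antisymm hab h
        simp [this]
  have Nmono : ∀ a b : ℕ, a ≤ b → b < q → N a ≤ N b := by
    intro a b hab hb
    exact Nat.floor_mono ((div_le_div_iff_of_pos_right habar).mpr (csmono a b hab hb))
  have Ntop : N (q - 1) = n := by
    have h1 : cumSupply btilde (q-1) / abar = (n : ℝ) := by
      rw [← htot]; field_simp
    simp [hN, h1]
  have Nle : ∀ ℓ, ℓ < q → N ℓ ≤ n := by
    intro ℓ h
    have := Nmono ℓ (q-1) (Nat.le_pred_of_lt h) (by omega)
    omega
  -- the counting bound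
  have cardlt : ∀ ℓ, 1 ≤ ℓ → ℓ < q →
      ((Finset.univ.filter (fun j => S j < u ℓ)).card ≤ N (ℓ-1)) := by
    intro ℓ h1 hℓ
    set F := Finset.univ.filter (fun j : Fin n => S j < u ℓ) with hF
    have hlu : u (ℓ-1) < u ℓ := by
      have h' : ℓ - 1 + 1 = ℓ := by omega
      have := humono (ℓ-1) (by rw [h']; exact hℓ)
      rwa [h'] at this
    rcases F.eq_empty_or_nonempty with he | hne
    · simp [he]
    · set t := max (u (ℓ-1)) (F.sup' hne S) with ht
      have ht0 : 0 ≤ t := le_trans (unn (ℓ-1) (by omega)) (le_max_left _ _)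
      have htlt : t < u ℓ := by
        apply max_lt hlu
        rw [Finset.sup'_lt_iff hne]
        intro j hj
        exact (Finset.mem_filter.mp hj).2
      have hmax : ∀ ℓ', ℓ' < q → u ℓ' ≤ t → ℓ' ≤ ℓ - 1 := by
        intro ℓ' hℓ' hle
        by_contra hgt
        push_neg at hgt
        have h2 : ℓ ≤ ℓ' := by omega
        have : u ℓ ≤ u ℓ' := umono ℓ ℓ' h2 hℓ'
        linarith
      have hf := hfeas t ht0 (ℓ-1) (by omega) (le_max_left _ _) hmax
      have hsub : F ⊆ Finset.univ.filter (fun j => S j ≤ t) := by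
        intro j hj
        have hjF := hj
        simp only [hF, Finset.mem_filter, Finset.mem_univ, true_and] at hjF ⊢
        exact le_trans (Finset.le_sup' S hj) (le_max_right _ _)
      have hcard : (F.card : ℝ) * abar ≤ cumSupply btilde (ℓ-1) := by
        refine le_trans ?_ hf
        exact mul_le_mul_of_nonneg_right
          (Nat.cast_le.mpr (Finset.card_le_card hsub)) habar.le
      exact Nat.le_floor (by rw [le_div_iff₀ habar]; exact hcard)
  -- the telescoping time bound
  have key : ∀ x : ℝ, 0 ≤ x →
      (∑ ℓ ∈ Finset.Ico 1 q, if u ℓ ≤ x then u ℓ - u (ℓ-1) else 0) ≤ x := by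
    intro x hx
    have H : ∀ m, m ≤ q →
        (∑ ℓ ∈ Finset.Ico 1 m, if u ℓ ≤ x then u ℓ - u (ℓ-1) else 0)
          ≤ min x (u (m-1)) := by
      intro m
      induction m with
      | zero => intro _; simp [hu0, min_eq_right hx]
      | succ m ih =>
        intro hm
        rcases Nat.eq_zero_or_pos m with rfl | hm1
        · simp [hu0, min_eq_right hx]
        · have hmq : m < q := by omega
          rw [Finset.sum_Ico_succ_top (by omega : 1 ≤ m)]
          have ihm := ih (by omega)
          have hup : u (m-1) ≤ u m := umono (m-1) m (by omega) hmq
          have hsub1 : m + 1 - 1 = m := by omega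
          rw [hsub1]
          by_cases hc : u m ≤ x
          · rw [if_pos hc]
            have hmr : min x (u (m-1)) ≤ u (m-1) := min_le_right _ _
            refine le_min (by linarith) (by linarith)
          · rw [if_neg hc, add_zero]
            exact le_trans ihm (min_le_min le_rfl hup)
    exact le_trans (H q le_rfl) (min_le_left _ _)
  -- main chain
  have step1 : ∑ j, (S j + p j) ≥ ∑ j, S j := by
    apply Finset.sum_le_sum
    intro j _
    linarith [(hp j).le]
  have step2 : ∑ j, S j ≥
      ∑ j, ∑ ℓ ∈ Finset.Ico 1 q, (if u ℓ ≤ S j then u ℓ - u (ℓ-1) else 0) := by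
    apply Finset.sum_le_sum
    intro j _
    exact key (S j) (hS0 j)
  have swap : (∑ j, ∑ ℓ ∈ Finset.Ico 1 q, (if u ℓ ≤ S j then u ℓ - u (ℓ-1) else 0))
      = ∑ ℓ ∈ Finset.Ico 1 q,
          ((Finset.univ.filter (fun j => u ℓ ≤ S j)).card : ℝ) * (u ℓ - u (ℓ-1)) := by
    rw [Finset.sum_comm]
    refine Finset.sum_congr rfl ?_
    intro ℓ _
    rw [Finset.sum_ite, Finset.sum_const, Finset.sum_const_zero, add_zero,
      nsmul_eq_mul]
  have step3 : ∑ ℓ ∈ Finset.Ico 1 q,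
        ((Finset.univ.filter (fun j => u ℓ ≤ S j)).card : ℝ) * (u ℓ - u (ℓ-1))
      ≥ ∑ ℓ ∈ Finset.Ico 1 q, ((n : ℝ) - N (ℓ-1)) * (u ℓ - u (ℓ-1)) := by
    apply Finset.sum_le_sum
    intro ℓ hℓ
    rw [Finset.mem_Ico] at hℓ
    have hlu : 0 ≤ u ℓ - u (ℓ-1) := by
      have : u (ℓ-1) ≤ u ℓ := umono (ℓ-1) ℓ (by omega) hℓ.2
      linarith
    apply mul_le_mul_of_nonneg_right _ hlu
    have hcompl : (Finset.univ.filter (fun j : Fin n => S j < u ℓ)).card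
        + (Finset.univ.filter (fun j : Fin n => ¬ S j < u ℓ)).card = n := by
      rw [Finset.card_filter_add_card_filter_not]
      simp
    have hco : (Finset.univ.filter (fun j : Fin n => ¬ S j < u ℓ))
        = Finset.univ.filter (fun j : Fin n => u ℓ ≤ S j) := by
      apply Finset.filter_congr
      intro j _
      simp [not_lt]
    rw [hco] at hcompl
    have hle := cardlt ℓ hℓ.1 hℓ.2
    have hn : ((Finset.univ.filter (fun j : Fin n => u ℓ ≤ S j)).card : ℝ)
        = (n : ℝ) - ((Finset.univ.filter (fun j : Fin n => S j < u ℓ)).card : ℝ) := by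
      have := hcompl
      push_cast [← this]
      ring
    rw [hn]
    have : ((Finset.univ.filter (fun j : Fin n => S j < u ℓ)).card : ℝ) ≤ (N (ℓ-1) : ℝ) :=
      Nat.cast_le.mpr hle
    linarith
  -- Abel / telescoping identity
  have abel : ∑ ℓ ∈ Finset.Ico 1 q, ((n : ℝ) - N (ℓ-1)) * (u ℓ - u (ℓ-1))
      = ∑ ℓ ∈ Finset.Ico 1 q, u ℓ * ((N ℓ - N (ℓ-1) : ℕ) : ℝ) := by
    set f : ℕ → ℝ := fun ℓ => u ℓ * ((n : ℝ) - N ℓ) with hf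
    have hdiff : ∀ ℓ ∈ Finset.Ico 1 q,
        ((n : ℝ) - N (ℓ-1)) * (u ℓ - u (ℓ-1)) - u ℓ * ((N ℓ - N (ℓ-1) : ℕ) : ℝ)
          = f ℓ - f (ℓ-1) := by
      intro ℓ hℓ
      rw [Finset.mem_Ico] at hℓ
      have hmono : N (ℓ-1) ≤ N ℓ := Nmono (ℓ-1) ℓ (by omega) hℓ.2
      rw [Nat.cast_sub hmono]
      simp only [hf]
      ring
    have htel : ∑ ℓ ∈ Finset.Ico 1 q, (f ℓ - f (ℓ-1)) = f (q-1) - f 0 := by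
      rw [Finset.sum_Ico_eq_sum_range]
      have : ∀ i, f (1 + i) - f (1 + i - 1) = f (i+1) - f i := by
        intro i
        rw [Nat.add_comm 1 i]
        norm_num
      rw [Finset.sum_congr rfl (fun i _ => this i), Finset.sum_range_sub f]
    have hf0 : f 0 = 0 := by simp [hf, hu0]
    have hfq : f (q-1) = 0 := by simp [hf, Ntop]
    have := Finset.sum_sub_distrib (s := Finset.Ico 1 q)
      (f := fun ℓ => ((n : ℝ) - N (ℓ-1)) * (u ℓ - u (ℓ-1)))
      (g := fun ℓ => u ℓ * ((N ℓ - N (ℓ-1) : ℕ) : ℝ))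
    rw [← Finset.sum_congr rfl hdiff] at htel
    rw [hf0, hfq, sub_zero] at htel
    have hz : ∑ ℓ ∈ Finset.Ico 1 q,
        (((n : ℝ) - N (ℓ-1)) * (u ℓ - u (ℓ-1)) - u ℓ * ((N ℓ - N (ℓ-1) : ℕ) : ℝ)) = 0 := htel
    rw [Finset.sum_sub_distrib] at hz
    linarith
  calc ∑ j, (S j + p j) ≥ ∑ j, S j := step1
    _ ≥ ∑ j, ∑ ℓ ∈ Finset.Ico 1 q, (if u ℓ ≤ S j then u ℓ - u (ℓ-1) else 0) := step2
    _ = ∑ ℓ ∈ Finset.Ico 1 q,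
          ((Finset.univ.filter (fun j => u ℓ ≤ S j)).card : ℝ) * (u ℓ - u (ℓ-1)) := swap
    _ ≥ ∑ ℓ ∈ Finset.Ico 1 q, ((n : ℝ) - N (ℓ-1)) * (u ℓ - u (ℓ-1)) := step3
    _ = ∑ ℓ ∈ Finset.Ico 1 q, u ℓ * ((N ℓ - N (ℓ-1) : ℕ) : ℝ) := abel
end

section
/- Consider an instance of single-machine scheduling with one non-renewable resource in which every job has the same resource requirement a_j = ā > 0, the jobs are indexed so that p_1 ≤ p_2 ≤ … ≤ p_n, and n·ā = b_q. Let n_ℓ := ⌊b_ℓ / ā⌋ and for each i ∈ {1, …, n} let ℓ(i) := min{ℓ : i ≤ n_ℓ}. Define the list schedule S by S_1 := u_{ℓ(1)} and S_i := max(S_{i−1} + p_{i−1}, u_{ℓ(i)}) for i = 2, …, n. Then S is a feasible schedule, and for every feasible schedule S* it holds that ∑_{i=1}^n (S_i + p_i) ≤ 2·∑_{j=1}^n (S*_j + p_j); that is, scheduling the jobs in non-decreasing processing-time order is a factor-2 approximation for minimizing ∑_j C_j. -/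
open Classical

/-- `nJobs btilde abar ℓ = n_ℓ = ⌊b_ℓ/ā⌋`, the number of jobs that can be served
from the first `ℓ+1` supplies when all jobs require `ā` units. -/
noncomputable def nJobs (btilde : ℕ → ℝ) (abar : ℝ) (ℓ : ℕ) : ℕ :=
  ⌊cumSupply btilde ℓ / abar⌋₊

/-- The list schedule in job order `0, 1, …`: job `i` starts at the maximum of the
previous job's completion time and the supply date `u (ℓ(i))`, where
`ℓ(i) = min {ℓ | i + 1 ≤ n_ℓ}` is the first period whose cumulative supply covers
the first `i+1` jobs. -/
noncomputable def listSched (p u btilde : ℕ → ℝ) (abar : ℝ) : ℕ → ℝ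
  | 0 => u (sInf {ℓ : ℕ | 1 ≤ nJobs btilde abar ℓ})
  | (i + 1) => max (listSched p u btilde abar i + p i)
      (u (sInf {ℓ : ℕ | i + 2 ≤ nJobs btilde abar ℓ}))

/-- Feasibility of a schedule `S` of `n` jobs (indexed `0, …, n-1`, 0-based) with
processing times `p`, common resource requirement `abar`, and `q` supplies at dates
`u 0 < u 1 < …` delivering `btilde` units. -/
def Feasible (n q : ℕ) (p : ℕ → ℝ) (abar : ℝ) (u btilde : ℕ → ℝ) (S : ℕ → ℝ) : Prop :=
  (∀ j, j < n → 0 ≤ S j) ∧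
  (∀ j, j < n → ∀ j', j' < n → j ≠ j' → S j + p j ≤ S j' ∨ S j' + p j' ≤ S j) ∧
  (∀ t : ℝ, 0 ≤ t → ∀ ℓ, ℓ < q → u ℓ ≤ t →
    (∀ ℓ', ℓ' < q → u ℓ' ≤ t → ℓ' ≤ ℓ) →
    (((Finset.range n).filter (fun j => S j ≤ t)).card : ℝ) * abar ≤ cumSupply btilde ℓ)

/-- Packing lemma: pairwise disjoint intervals `[S j, S j + p j)` with nonneg starts,
all finishing by `T`, have total length at most `T`. -/
lemma interval_packing (p S : ℕ → ℝ) : ∀ (F : Finset ℕ),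
    (∀ j ∈ F, 0 < p j) → (∀ j ∈ F, 0 ≤ S j) →
    (∀ j ∈ F, ∀ j' ∈ F, j ≠ j' → S j + p j ≤ S j' ∨ S j' + p j' ≤ S j) →
    ∀ T : ℝ, 0 ≤ T → (∀ j ∈ F, S j + p j ≤ T) → ∑ j ∈ F, p j ≤ T := by
  intro F
  induction F using Finset.strongInduction with
  | _ F ih =>
    intro hp hS hdisj T hT0 hT
    rcases F.eq_empty_or_nonempty with rfl | hne
    · simpa using hT0
    · obtain ⟨j0, hj0, hmax⟩ := F.exists_max_image S hne
      have herase : F.erase j0 ⊂ F := Finset.erase_ssubset hj0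
      have key : ∀ j ∈ F.erase j0, S j + p j ≤ S j0 := by
        intro j hj
        have hjF := Finset.mem_of_mem_erase hj
        have hne' := Finset.ne_of_mem_erase hj
        rcases hdisj j hjF j0 hj0 hne' with h | h
        · exact h
        · exfalso
          have h1 := hmax j hjF
          have h2 := hp j0 hj0
          linarith
      have hrec := ih (F.erase j0) herase
        (fun j hj => hp j (Finset.mem_of_mem_erase hj))
        (fun j hj => hS j (Finset.mem_of_mem_erase hj))
        (fun j hj j' hj' hne'' =>
          hdisj j (Finset.mem_of_mem_erase hj) j' (Finset.mem_of_mem_erase hj') hne'')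
        (S j0) (hS j0 hj0) key
      have hsum : ∑ j ∈ F, p j = p j0 + ∑ j ∈ F.erase j0, p j :=
        (Finset.add_sum_erase F p hj0).symm
      have := hT j0 hj0
      linarith

/-- If `p` is nondecreasing on `[0,n)` and `T ⊆ range n` has `m` elements, then the
sum of the `m` smallest values bounds the sum over `T` from below. -/
lemma sorted_sum_le (p : ℕ → ℝ) (n : ℕ) (hsorted : ∀ i j, i ≤ j → j < n → p i ≤ p j)
    (hp : ∀ j, j < n → 0 < p j) :
    ∀ (m : ℕ) (T : Finset ℕ), T ⊆ Finset.range n → T.card = m →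
      ∑ k ∈ Finset.range m, p k ≤ ∑ j ∈ T, p j := by
  intro m
  induction m with
  | zero =>
    intro T hT _
    simp only [Finset.range_zero, Finset.sum_empty]
    exact Finset.sum_nonneg fun j hj => (hp j (Finset.mem_range.mp (hT hj))).le
  | succ m ih =>
    intro T hTn hcard
    have hne : T.Nonempty := Finset.card_pos.mp (by omega)
    set M := T.max' hne with hM
    have hMT : M ∈ T := T.max'_mem hne
    have hMn : M < n := Finset.mem_range.mp (hTn hMT)
    have hsub : T ⊆ Finset.range (M + 1) := fun j hj =>
      Finset.mem_range.mpr (Nat.lt_succ_of_le (T.le_max' j hj))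
    have hmM : m ≤ M := by
      have := Finset.card_le_card hsub
      rw [hcard, Finset.card_range] at this; omega
    have h1 : ∑ k ∈ Finset.range m, p k ≤ ∑ j ∈ T.erase M, p j :=
      ih (T.erase M) (fun j hj => hTn (Finset.mem_of_mem_erase hj))
        (by rw [Finset.card_erase_of_mem hMT, hcard]; omega)
    have h2 : p m ≤ p M := hsorted m M hmM hMn
    have h3 : ∑ j ∈ T, p j = p M + ∑ j ∈ T.erase M, p j :=
      (Finset.add_sum_erase T p hMT).symm
    rw [Finset.sum_range_succ]
    linarith


/-- For equal resource requirements `a_j = ā > 0`, jobs indexed in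
non-decreasing processing-time order, and `n·ā = b_q`, the list schedule (SPT order)
is feasible, and its total completion time is at most twice that of any feasible
schedule. -/
theorem spt_list_scheduling_two_approx (n q : ℕ) (hq : 1 ≤ q) (hn : 1 ≤ n)
    (p : ℕ → ℝ) (hp : ∀ j, j < n → 0 < p j)
    (hsorted : ∀ i j, i ≤ j → j < n → p i ≤ p j)
    (abar : ℝ) (habar : 0 < abar)
    (u btilde : ℕ → ℝ)
    (hu0 : u 0 = 0)
    (humono : ∀ ℓ, ℓ + 1 < q → u ℓ < u (ℓ + 1))
    (hbt : ∀ ℓ, ℓ < q → 0 < btilde ℓ)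
    (htot : (n : ℝ) * abar = cumSupply btilde (q - 1)) :
    Feasible n q p abar u btilde (listSched p u btilde abar) ∧
    ∀ Sstar : ℕ → ℝ, Feasible n q p abar u btilde Sstar →
      ∑ j ∈ Finset.range n, (listSched p u btilde abar j + p j) ≤
        2 * ∑ j ∈ Finset.range n, (Sstar j + p j) := by
  set ℓf : ℕ → ℕ := fun i => sInf {ℓ : ℕ | i + 1 ≤ nJobs btilde abar ℓ} with hℓf
  set S : ℕ → ℝ := listSched p u btilde abar with hS
  -- basic supply facts
  have hbpos : ∀ ℓ, ℓ < q → 0 < cumSupply btilde ℓ := by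
    intro ℓ hℓ
    apply Finset.sum_pos
    · intro k hk
      exact hbt k (by have := Finset.mem_range.mp hk; omega)
    · exact ⟨0, Finset.mem_range.mpr (by omega)⟩
  have hbmono : ∀ ℓ ℓ', ℓ ≤ ℓ' → ℓ' < q → cumSupply btilde ℓ ≤ cumSupply btilde ℓ' := by
    intro ℓ ℓ' h h'
    apply Finset.sum_le_sum_of_subset_of_nonneg
    · exact Finset.range_subset_range.mpr (by omega)
    · intro k hk _
      exact (hbt k (by have := Finset.mem_range.mp hk; omega)).le
  have hnmono : ∀ ℓ ℓ', ℓ ≤ ℓ' → ℓ' < q →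
      nJobs btilde abar ℓ ≤ nJobs btilde abar ℓ' := by
    intro ℓ ℓ' h h'
    exact Nat.floor_le_floor (by
      apply div_le_div_of_nonneg_right (hbmono ℓ ℓ' h h') habar.le)
  have hnq : nJobs btilde abar (q - 1) = n := by
    unfold nJobs
    rw [← htot, mul_div_assoc, div_self habar.ne', mul_one, Nat.floor_natCast]
  -- ℓf facts
  have hsetne : ∀ i, i < n → (q - 1) ∈ {ℓ : ℕ | i + 1 ≤ nJobs btilde abar ℓ} := by
    intro i hi; simp only [Set.mem_setOf_eq, hnq]; omega
  have hℓle : ∀ i, i < n → i + 1 ≤ nJobs btilde abar (ℓf i) := by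
    intro i hi
    exact Nat.sInf_mem (⟨q - 1, hsetne i hi⟩ : {ℓ : ℕ | i + 1 ≤ nJobs btilde abar ℓ}.Nonempty)
  have hℓq : ∀ i, i < n → ℓf i < q := by
    intro i hi
    have h' : ℓf i ≤ q - 1 := Nat.sInf_le (hsetne i hi)
    omega
  have hℓmin : ∀ i ℓ, ℓ < ℓf i → nJobs btilde abar ℓ < i + 1 := by
    intro i ℓ h
    by_contra hc
    push_neg at hc
    have h' : ℓf i ≤ ℓ := Nat.sInf_le hc
    omega
  have hℓmono : ∀ i i', i ≤ i' → i' < n → ℓf i ≤ ℓf i' := by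
    intro i i' h h'
    apply Nat.sInf_le
    have := hℓle i' h'
    simp only [Set.mem_setOf_eq]
    omega
  -- u facts
  have humono' : ∀ ℓ', ℓ' < q → ∀ ℓ, ℓ ≤ ℓ' → u ℓ ≤ u ℓ' := by
    intro ℓ'
    induction ℓ' with
    | zero => intro _ ℓ hℓ; interval_cases ℓ; exact le_refl _
    | succ m ih =>
      intro hq' ℓ hℓ
      rcases Nat.lt_succ_iff_lt_or_eq.mp (Nat.lt_succ_of_le hℓ) with h | h
      · exact le_trans (ih (by omega) ℓ (by omega)) (humono m hq').le
      · exact h ▸ le_refl _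
  have hu_nonneg : ∀ ℓ, ℓ < q → 0 ≤ u ℓ := fun ℓ h => hu0 ▸ humono' ℓ h 0 (Nat.zero_le _)
  have hustrict : ∀ ℓ ℓ', ℓ < ℓ' → ℓ' < q → u ℓ < u ℓ' := by
    intro ℓ ℓ' h h'
    have h1 : u ℓ ≤ u (ℓ' - 1) := humono' (ℓ' - 1) (by omega) ℓ (by omega)
    have h2 : u (ℓ' - 1) < u ℓ' := by
      have := humono (ℓ' - 1) (by omega)
      rwa [Nat.sub_add_cancel (by omega)] at this
    linarith
  -- listSched facts
  have hS0 : S 0 = u (ℓf 0) := rfl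
  have hSsucc : ∀ i, S (i + 1) = max (S i + p i) (u (ℓf (i + 1))) := fun i => rfl
  have hSstep : ∀ i, S i + p i ≤ S (i + 1) := fun i => (hSsucc i) ▸ le_max_left _ _
  have hSu : ∀ i, u (ℓf i) ≤ S i := by
    intro i
    cases i with
    | zero => exact hS0.ge
    | succ m => exact (hSsucc m) ▸ le_max_right _ _
  have hS_nonneg : ∀ i, i < n → 0 ≤ S i := fun i hi =>
    le_trans (hu_nonneg _ (hℓq i hi)) (hSu i)
  have hSchain : ∀ j, j < n → ∀ i, i < j → S i + p i ≤ S j := by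
    intro j hjn
    induction j with
    | zero => omega
    | succ m ih =>
      intro i hij
      rcases Nat.lt_succ_iff_lt_or_eq.mp hij with h | h
      · calc S i + p i ≤ S m := ih (by omega) i h
          _ ≤ S m + p m := le_add_of_nonneg_right (hp m (by omega)).le
          _ ≤ S (m + 1) := hSstep m
      · exact h ▸ hSstep i
  have hCbound : ∀ i, i < n → S i + p i ≤ u (ℓf i) + ∑ k ∈ Finset.range (i + 1), p k := by
    intro i
    induction i with
    | zero => intro _; rw [hS0, Finset.sum_range_one]
    | succ m ih =>
      intro hm
      have hmn : m < n := by omega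
      have h1 : S m + p m ≤ u (ℓf (m + 1)) + ∑ k ∈ Finset.range (m + 1), p k := by
        have := ih hmn
        have hu' : u (ℓf m) ≤ u (ℓf (m + 1)) :=
          humono' (ℓf (m + 1)) (hℓq (m + 1) hm) (ℓf m) (hℓmono m (m + 1) (by omega) hm)
        linarith
      have h2 : u (ℓf (m + 1)) ≤ u (ℓf (m + 1)) + ∑ k ∈ Finset.range (m + 1), p k := by
        have : 0 ≤ ∑ k ∈ Finset.range (m + 1), p k :=
          Finset.sum_nonneg fun k hk => (hp k (by have := Finset.mem_range.mp hk; omega)).le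
        linarith
      have h3 : S (m + 1) ≤ u (ℓf (m + 1)) + ∑ k ∈ Finset.range (m + 1), p k := by
        rw [hSsucc m]; exact max_le h1 h2
      rw [Finset.sum_range_succ]
      linarith
  constructor
  · -- Feasibility of the list schedule
    refine ⟨hS_nonneg, ?_, ?_⟩
    · intro j hj j' hj' hne
      rcases Nat.lt_or_ge j j' with h | h
      · exact Or.inl (hSchain j' hj' j h)
      · exact Or.inr (hSchain j hj j' (by omega))
    · intro t ht ℓ hℓ hut hmax
      have hsub : (Finset.range n).filter (fun j => S j ≤ t) ⊆
          Finset.range (nJobs btilde abar ℓ) := by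
        intro i hi
        simp only [Finset.mem_filter, Finset.mem_range] at hi ⊢
        obtain ⟨hin, hit⟩ := hi
        have h1 : u (ℓf i) ≤ t := le_trans (hSu i) hit
        have h2 : ℓf i ≤ ℓ := hmax (ℓf i) (hℓq i hin) h1
        have h3 := hℓle i hin
        have h4 := hnmono (ℓf i) ℓ h2 hℓ
        omega
      have hcard : ((Finset.range n).filter (fun j => S j ≤ t)).card ≤
          nJobs btilde abar ℓ := by
        have := Finset.card_le_card hsub
        simpa using this
      have hfl : (nJobs btilde abar ℓ : ℝ) ≤ cumSupply btilde ℓ / abar :=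
        Nat.floor_le (div_nonneg (hbpos ℓ hℓ).le habar.le)
      calc (((Finset.range n).filter (fun j => S j ≤ t)).card : ℝ) * abar
          ≤ (nJobs btilde abar ℓ : ℝ) * abar := by
            apply mul_le_mul_of_nonneg_right _ habar.le
            exact_mod_cast hcard
        _ ≤ (cumSupply btilde ℓ / abar) * abar :=
            mul_le_mul_of_nonneg_right hfl habar.le
        _ = cumSupply btilde ℓ := div_mul_cancel₀ _ habar.ne'
  · -- 2-approximation
    intro Sstar hfeas
    obtain ⟨hSs0, hSsdisj, hSsres⟩ := hfeas
    -- count lemma: at most i jobs of a feasible schedule start before u (ℓf i)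
    have hcount : ∀ i, i < n →
        ((Finset.range n).filter (fun j => Sstar j < u (ℓf i))).card ≤ i := by
      intro i hi
      set L := ℓf i with hLdef
      rcases Nat.eq_zero_or_pos L with hL0 | hL1
      · have : (Finset.range n).filter (fun j => Sstar j < u L) = ∅ := by
          apply Finset.filter_false_of_mem
          intro j hj
          have := hSs0 j (Finset.mem_range.mp hj)
          rw [hL0, hu0]
          linarith
        rw [this]; simp
      · set F := (Finset.range n).filter (fun j => Sstar j < u L) with hF
        set t := (insert (u (L - 1)) (F.image Sstar)).max' (Finset.insert_nonempty _ _) with htd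
        have huL1q : L - 1 < q := by have := hℓq i hi; omega
        have htlt : t < u L := by
          apply Finset.max'_lt_iff _ _ |>.mpr
          intro x hx
          rcases Finset.mem_insert.mp hx with rfl | hx
          · exact hustrict (L - 1) L (by omega) (hℓq i hi)
          · obtain ⟨j, hj, rfl⟩ := Finset.mem_image.mp hx
            exact (Finset.mem_filter.mp hj).2
        have hut : u (L - 1) ≤ t := Finset.le_max' _ _ (Finset.mem_insert_self _ _)
        have ht0 : 0 ≤ t := le_trans (hu_nonneg (L - 1) huL1q) hut
        have hmax : ∀ ℓ', ℓ' < q → u ℓ' ≤ t → ℓ' ≤ L - 1 := by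
          intro ℓ' h1 h2
          by_contra h
          push_neg at h
          have : u L ≤ u ℓ' := humono' ℓ' h1 L (by omega)
          linarith
        have hres := hSsres t ht0 (L - 1) huL1q hut hmax
        have hFsub : F ⊆ (Finset.range n).filter (fun j => Sstar j ≤ t) := by
          intro j hj
          rw [Finset.mem_filter]
          refine ⟨(Finset.mem_filter.mp hj).1, ?_⟩
          exact Finset.le_max' _ _ (Finset.mem_insert_of_mem
            (Finset.mem_image_of_mem Sstar hj))
        have hcard1 : (F.card : ℝ) * abar ≤ cumSupply btilde (L - 1) :=
          le_trans (mul_le_mul_of_nonneg_right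
            (by exact_mod_cast Finset.card_le_card hFsub) habar.le) hres
        have hcard2 : F.card ≤ nJobs btilde abar (L - 1) := by
          apply Nat.le_floor
          rw [le_div_iff₀ habar]
          exact hcard1
        have := hℓmin i (L - 1) (by omega)
        omega
    -- sorted completion times of Sstar
    set g : Fin n → ℝ := fun j => Sstar j.val + p j.val with hg
    set σ := Tuple.sort g with hσ
    have hmono : Monotone (g ∘ σ) := Tuple.monotone_sort g
    have hTfacts : ∀ i : Fin n,
        ∃ T : Finset ℕ, T.card = i.val + 1 ∧ T ⊆ Finset.range n ∧
          ∀ j ∈ T, Sstar j + p j ≤ g (σ i) := by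
      intro i
      refine ⟨(Finset.Iic i).image (fun j => (σ j).val), ?_, ?_, ?_⟩
      · have hinj : Function.Injective (fun j : Fin n => (σ j).val) :=
          fun a b h => σ.injective (Fin.val_injective h)
        rw [Finset.card_image_of_injective _ hinj]
        simp
      · intro j hj
        obtain ⟨k, _, rfl⟩ := Finset.mem_image.mp hj
        exact Finset.mem_range.mpr (σ k).isLt
      · intro j hj
        obtain ⟨k, hk, rfl⟩ := Finset.mem_image.mp hj
        exact hmono (Finset.mem_Iic.mp hk)
    have hgnn : ∀ i : Fin n, 0 ≤ g (σ i) := fun i =>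
      add_nonneg (hSs0 _ (σ i).isLt) (hp _ (σ i).isLt).le
    -- Claim B: sum of i+1 smallest processing times ≤ g (σ i)
    have claimB : ∀ i : Fin n, ∑ k ∈ Finset.range (i.val + 1), p k ≤ g (σ i) := by
      intro i
      obtain ⟨T, hTcard, hTsub, hTle⟩ := hTfacts i
      have h1 : ∑ j ∈ T, p j ≤ g (σ i) :=
        interval_packing p Sstar T
          (fun j hj => hp j (Finset.mem_range.mp (hTsub hj)))
          (fun j hj => hSs0 j (Finset.mem_range.mp (hTsub hj)))
          (fun j hj j' hj' hne => hSsdisj j (Finset.mem_range.mp (hTsub hj))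
            j' (Finset.mem_range.mp (hTsub hj')) hne)
          (g (σ i)) (hgnn i) hTle
      exact le_trans (sorted_sum_le p n hsorted hp (i.val + 1) T hTsub hTcard) h1
    -- Claim A: u (ℓf i) ≤ g (σ i)
    have claimA : ∀ i : Fin n, u (ℓf i.val) ≤ g (σ i) := by
      intro i
      by_contra h
      push_neg at h
      obtain ⟨T, hTcard, hTsub, hTle⟩ := hTfacts i
      have hsub : T ⊆ (Finset.range n).filter (fun j => Sstar j < u (ℓf i.val)) := by
        intro j hj
        rw [Finset.mem_filter]
        refine ⟨hTsub hj, ?_⟩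
        have h1 := hTle j hj
        have h2 := hp j (Finset.mem_range.mp (hTsub hj))
        linarith
      have := Finset.card_le_card hsub
      have := hcount i.val i.isLt
      omega
    -- combine
    have hstep : ∀ j ∈ Finset.range n, S j + p j ≤
        u (ℓf j) + ∑ k ∈ Finset.range (j + 1), p k := fun j hj =>
      hCbound j (Finset.mem_range.mp hj)
    calc ∑ j ∈ Finset.range n, (S j + p j)
        ≤ ∑ j ∈ Finset.range n, (u (ℓf j) + ∑ k ∈ Finset.range (j + 1), p k) :=
          Finset.sum_le_sum hstep
      _ = ∑ i : Fin n, (u (ℓf i.val) + ∑ k ∈ Finset.range (i.val + 1), p k) :=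
          (Fin.sum_univ_eq_sum_range _ n).symm
      _ ≤ ∑ i : Fin n, (g (σ i) + g (σ i)) := by
          apply Finset.sum_le_sum
          intro i _
          exact add_le_add (claimA i) (claimB i)
      _ = 2 * ∑ i : Fin n, g (σ i) := by
          rw [Finset.mul_sum]
          exact Finset.sum_congr rfl fun i _ => by ring
      _ = 2 * ∑ i : Fin n, g i := by rw [Equiv.sum_comp σ g]
      _ = 2 * ∑ j ∈ Finset.range n, (Sstar j + p j) := by
          rw [Fin.sum_univ_eq_sum_range (fun j => Sstar j + p j) n]
end

section
/- Let 0 < ε < 1, let n be a positive integer, and set Δ = 1 + ε/(2n). Define the rounding function r by r(0) = 0 and r(v) = Δ^{⌈log_Δ v⌉} for v > 0. Let v_1, …, v_t be nonnegative real numbers with t ≤ n, set g_0 = 0 and g_i = r(v_i + g_{i−1}) for i = 1, …, t. Then for every i = 1, …, t it holds that ∑_{j=1}^i v_j ≤ g_i ≤ (1 + ε)·∑_{j=1}^i v_j. -/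
open Classical

/-- The rounding function: `r 0 = 0` and `r v = Δ ^ ⌈log_Δ v⌉` for `v > 0`. -/
noncomputable def rnd (Δ : ℝ) (v : ℝ) : ℝ :=
  if v = 0 then 0 else Δ ^ ⌈Real.logb Δ v⌉

lemma rnd_bounds {Δ w : ℝ} (hΔ : 1 < Δ) (hw : 0 < w) :
    w ≤ rnd Δ w ∧ rnd Δ w ≤ Δ * w := by
  have hΔ0 : 0 < Δ := lt_trans one_pos hΔ
  set x := Real.logb Δ w with hx
  have hrw : rnd Δ w = Δ ^ ((⌈x⌉ : ℤ) : ℝ) := by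
    rw [rnd, if_neg hw.ne', Real.rpow_intCast]
  have hwx : Δ ^ x = w := Real.rpow_logb hΔ0 hΔ.ne' hw
  constructor
  · rw [hrw, ← hwx]
    exact Real.rpow_le_rpow_of_exponent_le hΔ.le (Int.le_ceil x)
  · rw [hrw]
    have : Δ ^ ((⌈x⌉ : ℤ) : ℝ) ≤ Δ ^ (x + 1) := by
      apply Real.rpow_le_rpow_of_exponent_le hΔ.le
      have := Int.ceil_lt_add_one x
      exact_mod_cast this.le
    calc Δ ^ ((⌈x⌉ : ℤ) : ℝ) ≤ Δ ^ (x + 1) := this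
      _ = Δ * w := by rw [Real.rpow_add hΔ0, hwx, Real.rpow_one, mul_comm]

lemma pow_Delta_le (ε : ℝ) (hε0 : 0 < ε) (hε1 : ε < 1) (n : ℕ) (hn : 1 ≤ n) :
    (1 + ε / (2 * n)) ^ n ≤ 1 + ε := by
  have hn0 : (0:ℝ) < n := by positivity
  have h1 : (1 + ε / (2 * n)) ^ n ≤ Real.exp (ε / 2) := by
    have : 1 + ε / (2 * n) ≤ Real.exp (ε / (2 * n)) := by
      have := Real.add_one_le_exp (ε / (2 * n))
      linarith
    calc (1 + ε / (2 * n)) ^ n ≤ Real.exp (ε / (2 * n)) ^ n := by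
          apply pow_le_pow_left₀ (by positivity) this
      _ = Real.exp (n * (ε / (2 * n))) := by rw [← Real.exp_nat_mul]
      _ = Real.exp (ε / 2) := by
          congr 1; field_simp
  have h2 : Real.exp (ε / 2) ≤ 1 / (1 - ε / 2) := by
    have h3 : 1 - ε / 2 ≤ Real.exp (-(ε / 2)) := by
      have := Real.add_one_le_exp (-(ε / 2)); linarith
    have hpos : 0 < 1 - ε / 2 := by linarith
    rw [le_div_iff₀ hpos]
    calc Real.exp (ε / 2) * (1 - ε / 2) ≤ Real.exp (ε / 2) * Real.exp (-(ε / 2)) := by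
          apply mul_le_mul_of_nonneg_left h3 (Real.exp_nonneg _)
      _ = 1 := by rw [← Real.exp_add]; simp
  have h4 : 1 / (1 - ε / 2) ≤ 1 + ε := by
    have hpos : 0 < 1 - ε / 2 := by linarith
    rw [div_le_iff₀ hpos]
    nlinarith
  linarith

/-- With `Δ = 1 + ε/(2n)`, `0 < ε < 1`, `n ≥ 1`, rounding running sums
of at most `n` nonnegative numbers via `g i = r (v i + g (i-1))` keeps each `g i`
between the true partial sum and `(1+ε)` times the true partial sum. -/
theorem rounded_partial_sums_bound (ε : ℝ) (hε0 : 0 < ε) (hε1 : ε < 1)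
    (n : ℕ) (hn : 1 ≤ n) (t : ℕ) (ht : t ≤ n)
    (v : ℕ → ℝ) (hv : ∀ i, 1 ≤ i → i ≤ t → 0 ≤ v i)
    (g : ℕ → ℝ) (hg0 : g 0 = 0)
    (hg : ∀ i, 1 ≤ i → i ≤ t → g i = rnd (1 + ε / (2 * n)) (v i + g (i - 1))) :
    ∀ i, 1 ≤ i → i ≤ t →
      (∑ j ∈ Finset.Icc 1 i, v j ≤ g i) ∧
      (g i ≤ (1 + ε) * ∑ j ∈ Finset.Icc 1 i, v j) := by
  set Δ : ℝ := 1 + ε / (2 * n) with hΔdef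
  have hn0 : (0:ℝ) < n := by positivity
  have hΔ : 1 < Δ := by
    have h : 0 < ε / (2 * (n:ℝ)) := by positivity
    simp only [hΔdef]
    linarith
  have hΔ0 : 0 < Δ := lt_trans one_pos hΔ
  -- S i := partial sum
  have hSnonneg : ∀ i, 0 ≤ ∑ j ∈ Finset.Icc 1 i, v j → True := fun _ _ => trivial
  -- main induction: S i ≤ g i ∧ g i ≤ Δ^i * S i
  have key : ∀ i, i ≤ t →
      (∑ j ∈ Finset.Icc 1 i, v j ≤ g i) ∧
      (g i ≤ Δ ^ i * ∑ j ∈ Finset.Icc 1 i, v j) := by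
    intro i
    induction i with
    | zero => intro _; simp [hg0]
    | succ k ih =>
      intro hik
      have hk : k ≤ t := Nat.le_of_succ_le hik
      obtain ⟨ih1, ih2⟩ := ih hk
      have hvk : 0 ≤ v (k + 1) := hv (k + 1) (by omega) hik
      have hSk : 0 ≤ ∑ j ∈ Finset.Icc 1 k, v j := by
        apply Finset.sum_nonneg
        intro j hj
        simp only [Finset.mem_Icc] at hj
        exact hv j hj.1 (le_trans hj.2 hk)
      have hgk : 0 ≤ g k := le_trans hSk ih1
      have hsum : ∑ j ∈ Finset.Icc 1 (k + 1), v j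
          = (∑ j ∈ Finset.Icc 1 k, v j) + v (k + 1) := by
        rw [Finset.sum_Icc_succ_top (by omega : 1 ≤ k + 1)]
      have hgeq : g (k + 1) = rnd Δ (v (k + 1) + g k) := by
        have := hg (k + 1) (by omega) hik
        simpa using this
      rcases eq_or_lt_of_le (by positivity : (0:ℝ) ≤ v (k + 1) + g k) with h0 | hpos
      · -- w = 0
        have hveq : v (k + 1) = 0 := by nlinarith
        have hgke : g k = 0 := by nlinarith
        have hSke : ∑ j ∈ Finset.Icc 1 k, v j = 0 := le_antisymm (by rw [← hgke]; exact ih1) hSk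
        have : g (k + 1) = 0 := by rw [hgeq, ← h0, rnd, if_pos rfl]
        rw [this, hsum, hSke, hveq]
        norm_num
      · obtain ⟨hb1, hb2⟩ := rnd_bounds hΔ hpos
        constructor
        · rw [hgeq, hsum]
          calc (∑ j ∈ Finset.Icc 1 k, v j) + v (k + 1) ≤ g k + v (k + 1) := by linarith
            _ = v (k + 1) + g k := by ring
            _ ≤ rnd Δ (v (k + 1) + g k) := hb1
        · rw [hgeq, hsum]
          have hΔk : 1 ≤ Δ ^ k := one_le_pow₀ hΔ.le
          calc rnd Δ (v (k + 1) + g k) ≤ Δ * (v (k + 1) + g k) := hb2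
            _ ≤ Δ * (v (k + 1) + Δ ^ k * ∑ j ∈ Finset.Icc 1 k, v j) := by
                apply mul_le_mul_of_nonneg_left _ hΔ0.le
                linarith
            _ ≤ Δ * (Δ ^ k * v (k + 1) + Δ ^ k * ∑ j ∈ Finset.Icc 1 k, v j) := by
                apply mul_le_mul_of_nonneg_left _ hΔ0.le
                nlinarith
            _ = Δ ^ (k + 1) * ((∑ j ∈ Finset.Icc 1 k, v j) + v (k + 1)) := by ring
  intro i hi1 hit
  obtain ⟨h1, h2⟩ := key i hit
  refine ⟨h1, ?_⟩
  have hS : 0 ≤ ∑ j ∈ Finset.Icc 1 i, v j := by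
    apply Finset.sum_nonneg
    intro j hj
    simp only [Finset.mem_Icc] at hj
    exact hv j hj.1 (le_trans hj.2 hit)
  have hΔi : Δ ^ i ≤ 1 + ε := by
    calc Δ ^ i ≤ Δ ^ n := pow_le_pow_right₀ hΔ.le (le_trans hit ht)
      _ ≤ 1 + ε := pow_Delta_le ε hε0 hε1 n hn
  calc g i ≤ Δ ^ i * ∑ j ∈ Finset.Icc 1 i, v j := h2
    _ ≤ (1 + ε) * ∑ j ∈ Finset.Icc 1 i, v j := mul_le_mul_of_nonneg_right hΔi hS
end
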